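/- The number of nondegenerate 2 × k × (k+1) hypermatrices over the finite field F_q equals q^{k²}·(q-1)^{2k}·[k]!_q·[k+1]!_q, where [n]_q = 1 + q + ⋯ + q^{n-1} and [n]!_q = [1]_q[2]_q⋯[n]_q. -/

import Mathlib

open Matrix Finset

/-- The `q`-integer `[n]_q = 1 + q + ⋯ + q^{n-1}`. -/
def qInt (q n : ℕ) : ℕ := ∑ i ∈ Finset.range n, q ^ i

/-- The `q`-factorial `[n]!_q = [1]_q [2]_q ⋯ [n]_q`. -/
def qFact (q n : ℕ) : ℕ := ∏ i ∈ Finset.range n, qInt q (i + 1)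

/-!
Left multiplication by `GL_{k+1}(F)` preserves nondegeneracy, and nondegeneracy (at `c₁ = 0`)
forces `S₀` to have independent columns, so `S₀` can be moved to `E = [0; 1]`: the count is the
number of `(k + 1) × k` matrices of rank `k` times the number of `T` with `(E, T)` nondegenerate.
Writing `T = [b; A]`, the pencil `c₀ E + c₁ T` is injective for all `(c₀, c₁) ≠ 0` iff no
eigenvector of `A` is orthogonal to `b`. By the Hautus test (Cayley–Hamilton, and an eigenvector
in every nonzero `A`-invariant subspace over `F̄`) this says that the observability matrix
`O = [b; bA; …; bA^{k-1}]` is invertible. Finally `(b, A) ↦ (O, bA^k)` is a bijection onto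
`GL_k(F) × F^k`, because `O A` is `O` with its rows shifted up and `bA^k` appended. Hence the
count is `∏_{i<k} (q^{k+1} - q^i) · |GL_k(F)| · q^k`.
-/

open Function Polynomial

theorem Module.End.iInf_ker_comp_pow_eq_bot_iff {K V W : Type*} [Field K] [IsAlgClosed K]
    [AddCommGroup V] [Module K V] [FiniteDimensional K V] [AddCommGroup W] [Module K W]
    (f : Module.End K V) (φ : V →ₗ[K] W) :
    ⨅ i : ℕ, LinearMap.ker (φ ∘ₗ f ^ i) = ⊥ ↔ ∀ (μ : K) v, f v = μ • v → φ v = 0 → v = 0 := by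
  set U := ⨅ i : ℕ, LinearMap.ker (φ ∘ₗ f ^ i)
  have mem_U {v} : v ∈ U ↔ ∀ i : ℕ, φ ((f ^ i) v) = 0 := by
    simp only [U, Submodule.mem_iInf, LinearMap.mem_ker, LinearMap.comp_apply]
  constructor
  · intro hU μ v hv hφ
    have pow_apply (i : ℕ) : (f ^ i) v = μ ^ i • v := by
      induction i with
      | zero => simp
      | succ i ih => rw [pow_succ', Module.End.mul_apply, ih, map_smul, hv, smul_smul, ← pow_succ]
    rw [← Submodule.mem_bot K, ← hU, mem_U]
    intro i
    rw [pow_apply, map_smul, hφ, smul_zero]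
  · intro h
    have hfU : ∀ v ∈ U, f v ∈ U := fun v hv => mem_U.mpr fun i => by
      rw [← Module.End.mul_apply, ← pow_succ]
      exact mem_U.mp hv (i + 1)
    by_contra hU
    have := Submodule.nontrivial_iff_ne_bot.mpr hU
    obtain ⟨μ, hμ⟩ := Module.End.exists_eigenvalue (f.restrict hfU)
    obtain ⟨⟨v, hvU⟩, hv⟩ := hμ.exists_hasEigenvector
    refine hv.2 (Subtype.ext (h μ v (congrArg Subtype.val hv.apply_eq_smul) ?_))
    simpa using mem_U.mp hvU 0

namespace Matrix

variable {K : Type*} [Field K]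

theorem rank_eq_card_iff_forall_mulVec_eq_zero {m n : Type*} [Fintype n] (M : Matrix m n K) :
    M.rank = Fintype.card n ↔ ∀ v, M *ᵥ v = 0 → v = 0 := by
  rw [rank_eq_finrank_span_cols, eq_comm, ← Set.finrank,
    ← linearIndependent_iff_card_eq_finrank_span, ← mulVec_injective_iff,
    ← ker_mulVecLin_eq_bot_iff, LinearMap.ker_eq_bot]
  rfl

theorem isUnit_map_iff {L : Type*} [Field L] {n : Type*} [Fintype n] [DecidableEq n]
    (f : K →+* L) (M : Matrix n n K) : IsUnit (M.map f) ↔ IsUnit M := by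
  rw [isUnit_iff_isUnit_det, isUnit_iff_isUnit_det, ← RingHom.mapMatrix_apply, ← RingHom.map_det,
    isUnit_iff_ne_zero, isUnit_iff_ne_zero, _root_.map_ne_zero]

theorem pow_mem_span_pow_lt_card {n : Type*} [Fintype n] [DecidableEq n] (A : Matrix n n K)
    (N : ℕ) : A ^ N ∈ Submodule.span K ((A ^ ·) '' Set.Iio (Fintype.card n)) := by
  rcases (Fintype.card n).eq_zero_or_pos with hn | hn
  · have := Fintype.card_eq_zero_iff.mp hn
    rw [Subsingleton.elim (A ^ N) 0]
    exact zero_mem _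
  have hdeg : (X ^ N %ₘ A.charpoly).natDegree < Fintype.card n := by
    rw [← A.charpoly_natDegree_eq_dim]
    refine natDegree_modByMonic_lt _ A.charpoly_monic fun h => ?_
    have := A.charpoly_natDegree_eq_dim
    rw [h, natDegree_one] at this
    omega
  rw [pow_eq_aeval_mod_charpoly, aeval_eq_sum_range' hdeg]
  exact Submodule.sum_mem _ fun i hi =>
    Submodule.smul_mem _ _ (Submodule.subset_span ⟨i, Finset.mem_range.mp hi, rfl⟩)

theorem forall_pencil_iff_forall_eigenvector {n : Type*} [Fintype n] (b : n → K)
    (A : Matrix n n K) :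
    (∀ c₀ c₁ : K, ¬ (c₀ = 0 ∧ c₁ = 0) →
        ∀ v, c₁ * b ⬝ᵥ v = 0 ∧ c₀ • v + c₁ • (A *ᵥ v) = 0 → v = 0) ↔
      ∀ (μ : K) v, A *ᵥ v = μ • v → b ⬝ᵥ v = 0 → v = 0 := by
  constructor
  · intro h μ v hAv hbv
    refine h (-μ) 1 (by simp) v ⟨by rw [hbv, mul_zero], ?_⟩
    rw [one_smul, hAv, neg_smul, neg_add_cancel]
  · rintro h c₀ c₁ hc v ⟨hbv, hv⟩
    by_cases hc₁ : c₁ = 0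
    · rw [hc₁, zero_smul, add_zero] at hv
      exact (smul_eq_zero.mp hv).resolve_left fun hc₀ => hc ⟨hc₀, hc₁⟩
    have hAv : c₁ • (A *ᵥ v) = c₁ • (-(c₁⁻¹ * c₀) • v) := by
      rw [eq_neg_of_add_eq_zero_right hv, smul_smul, mul_neg, ← mul_assoc, mul_inv_cancel₀ hc₁,
        one_mul, neg_smul]
    exact h _ v (smul_right_injective _ hc₁ hAv) ((mul_eq_zero.mp hbv).resolve_left hc₁)

variable {k : ℕ}

def observabilityMatrix (b : Fin k → K) (A : Matrix (Fin k) (Fin k) K) :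
    Matrix (Fin k) (Fin k) K :=
  of fun i => b ᵥ* A ^ (i : ℕ)

theorem observabilityMatrix_mulVec_apply (b : Fin k → K) (A : Matrix (Fin k) (Fin k) K)
    (v : Fin k → K) (i : Fin k) :
    (observabilityMatrix b A *ᵥ v) i = b ⬝ᵥ (A ^ (i : ℕ) *ᵥ v) := by
  rw [dotProduct_mulVec]
  rfl

theorem ker_toLin'_observabilityMatrix (b : Fin k → K) (A : Matrix (Fin k) (Fin k) K) :
    LinearMap.ker (toLin' (observabilityMatrix b A)) =
      ⨅ i : ℕ, LinearMap.ker (dotProductEquiv K (Fin k) b ∘ₗ toLin' A ^ i) := by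
  ext v
  simp only [LinearMap.mem_ker, Submodule.mem_iInf, LinearMap.comp_apply, ← toLin'_pow,
    toLin'_apply, dotProductEquiv_apply_apply]
  constructor
  · intro hv i
    refine Submodule.span_induction (p := fun M _ => b ⬝ᵥ (M *ᵥ v) = 0) ?_ ?_ ?_ ?_
      (by simpa using A.pow_mem_span_pow_lt_card i)
    · rintro _ ⟨j, hj, rfl⟩
      simpa [observabilityMatrix_mulVec_apply] using congrFun hv ⟨j, hj⟩
    · simp
    · intro M N _ _ hM hN
      rw [add_mulVec, dotProduct_add, hM, hN, add_zero]
    · intro c M _ hM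
      rw [smul_mulVec, dotProduct_smul, hM, smul_zero]
  · intro h
    ext i
    rw [observabilityMatrix_mulVec_apply, h, Pi.zero_apply]

theorem isUnit_observabilityMatrix_iff [IsAlgClosed K] (b : Fin k → K)
    (A : Matrix (Fin k) (Fin k) K) :
    IsUnit (observabilityMatrix b A) ↔ ∀ (μ : K) v, A *ᵥ v = μ • v → b ⬝ᵥ v = 0 → v = 0 := by
  rw [← mulVec_injective_iff_isUnit]
  change Injective (toLin' (observabilityMatrix b A)) ↔ _
  rw [← LinearMap.ker_eq_bot, ker_toLin'_observabilityMatrix,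
    Module.End.iInf_ker_comp_pow_eq_bot_iff]
  simp only [toLin'_apply, dotProductEquiv_apply_apply]

theorem observabilityMatrix_map {L : Type*} [Field L] (f : K →+* L) (b : Fin k → K)
    (A : Matrix (Fin k) (Fin k) K) :
    observabilityMatrix (f ∘ b) (A.map f) = (observabilityMatrix b A).map f := by
  ext i j
  simp only [observabilityMatrix, map_apply, of_apply, RingHom.map_vecMul, Matrix.map_pow]

theorem observabilityMatrix_mul_self (b : Fin (k + 1) → K)
    (A : Matrix (Fin (k + 1)) (Fin (k + 1)) K) :
    observabilityMatrix b A * A =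
      of (Fin.snoc (fun i : Fin k => (observabilityMatrix b A).row i.succ) (b ᵥ* A ^ (k + 1))) := by
  ext i j
  refine Fin.lastCases ?_ (fun i => ?_) i
  · change (b ᵥ* A ^ k ᵥ* A) j = _
    rw [of_apply, Fin.snoc_last, vecMul_vecMul, ← pow_succ]
  · change (b ᵥ* A ^ (i : ℕ) ᵥ* A) j = _
    rw [of_apply, Fin.snoc_castSucc, vecMul_vecMul, ← pow_succ]
    rfl

theorem observabilityMatrix_eq_of_mul_eq {O A : Matrix (Fin (k + 1)) (Fin (k + 1)) K}
    {c : Fin (k + 1) → K} (h : O * A = of (Fin.snoc (fun i : Fin k => O.row i.succ) c)) :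
    observabilityMatrix (O.row 0) A = O ∧ O.row 0 ᵥ* A ^ (k + 1) = c := by
  have rows (i : Fin (k + 1)) : O.row 0 ᵥ* A ^ (i : ℕ) = O.row i := by
    induction i using Fin.induction with
    | zero => rw [Fin.val_zero, pow_zero, vecMul_one]
    | succ i ih =>
      rw [Fin.val_succ, pow_succ, ← vecMul_vecMul, ← Fin.val_castSucc, ih]
      funext j
      have := congrFun (congrFun h i.castSucc) j
      rwa [of_apply, Fin.snoc_castSucc] at this
  refine ⟨?_, ?_⟩
  · ext i j
    exact congrFun (rows i) j
  · rw [pow_succ, ← vecMul_vecMul,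
      show O.row 0 ᵥ* A ^ k = O.row (Fin.last k) from rows (Fin.last k)]
    funext j
    have := congrFun (congrFun h (Fin.last k)) j
    rwa [of_apply, Fin.snoc_last] at this

noncomputable def observablePairsEquiv (k : ℕ) :
    {p : (Fin (k + 1) → K) × Matrix (Fin (k + 1)) (Fin (k + 1)) K //
        IsUnit (observabilityMatrix p.1 p.2)} ≃ GL (Fin (k + 1)) K × (Fin (k + 1) → K) where
  toFun p := (p.2.unit, p.1.1 ᵥ* p.1.2 ^ (k + 1))
  invFun x :=
    have h : x.1.val * (x.1⁻¹.val * of (Fin.snoc (fun i : Fin k => x.1.val.row i.succ) x.2)) =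
        of (Fin.snoc (fun i : Fin k => x.1.val.row i.succ) x.2) := by
      rw [← Matrix.mul_assoc, Units.mul_inv, Matrix.one_mul]
    ⟨(x.1.val.row 0, x.1⁻¹.val * of (Fin.snoc (fun i : Fin k => x.1.val.row i.succ) x.2)), by
      rw [show observabilityMatrix _ _ = _ from (observabilityMatrix_eq_of_mul_eq h).1]
      exact x.1.isUnit⟩
  left_inv := by
    rintro ⟨⟨b, A⟩, hU⟩
    have hb : (observabilityMatrix b A).row 0 = b := vecMul_one b
    refine Subtype.ext (Prod.ext hb ?_)
    change hU.unit⁻¹.val * of (Fin.snoc (fun i : Fin k => hU.unit.val.row i.succ)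
      (b ᵥ* A ^ (k + 1))) = A
    rw [IsUnit.unit_spec, ← observabilityMatrix_mul_self, ← Matrix.mul_assoc, IsUnit.val_inv_mul,
      Matrix.one_mul]
  right_inv := by
    rintro ⟨O, c⟩
    have h : O.val * (O⁻¹.val * of (Fin.snoc (fun i : Fin k => O.val.row i.succ) c)) =
        of (Fin.snoc (fun i : Fin k => O.val.row i.succ) c) := by
      rw [← Matrix.mul_assoc, Units.mul_inv, Matrix.one_mul]
    exact Prod.ext (Units.ext (observabilityMatrix_eq_of_mul_eq h).1)
      (observabilityMatrix_eq_of_mul_eq h).2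

theorem card_observablePairs [Fintype K] (k : ℕ) :
    Nat.card {p : (Fin k → K) × Matrix (Fin k) (Fin k) K // IsUnit (observabilityMatrix p.1 p.2)} =
      Nat.card (GL (Fin k) K) * Fintype.card K ^ k := by
  cases k with
  | zero =>
    rw [Nat.card_congr (Equiv.subtypeUnivEquiv fun _ => isUnit_of_subsingleton _)]
    simp [Fintype.card_eq_one_iff.mpr
      ⟨(0 : Matrix (Fin 0) (Fin 0) K), fun _ => Subsingleton.elim _ _⟩]
  | succ k =>
    rw [Nat.card_congr (observablePairsEquiv k), Nat.card_prod]
    simp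

-- `[0; 1]`, the matrix of `v ↦ Fin.cons 0 v`.
def consZeroOne (R : Type*) [Zero R] [One R] (k : ℕ) : Matrix (Fin (k + 1)) (Fin k) R :=
  (1 : Matrix (Fin (k + 1)) (Fin (k + 1)) R).submatrix id Fin.succ

theorem consZeroOne_mulVec (v : Fin k → K) : consZeroOne K k *ᵥ v = Fin.cons 0 v := by
  ext i
  refine Fin.cases ?_ (fun i => ?_) i <;>
    simp [consZeroOne, mulVec, dotProduct, one_apply, (Fin.succ_ne_zero _).symm]

theorem map_consZeroOne {L : Type*} [Field L] (f : K →+* L) :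
    (consZeroOne K k).map f = consZeroOne L k := by
  rw [consZeroOne, ← submatrix_map, Matrix.map_one _ (map_zero f) (map_one f), consZeroOne]

theorem mul_consZeroOne (N : Matrix (Fin (k + 1)) (Fin (k + 1)) K) :
    N * consZeroOne K k = N.submatrix id Fin.succ := by
  ext i j
  simp [consZeroOne, mul_apply, one_apply]

theorem smul_consZeroOne_add_smul_mulVec_eq_zero_iff (c₀ c₁ : K)
    (T : Matrix (Fin (k + 1)) (Fin k) K) (v : Fin k → K) :
    (c₀ • consZeroOne K k + c₁ • T) *ᵥ v = 0 ↔
      c₁ * T 0 ⬝ᵥ v = 0 ∧ c₀ • v + c₁ • (T.submatrix Fin.succ id *ᵥ v) = 0 := by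
  rw [add_mulVec, smul_mulVec, smul_mulVec, consZeroOne_mulVec, funext_iff,
    Fin.forall_fin_succ, funext_iff]
  simp [mulVec, dotProduct]

theorem exists_mul_consZeroOne_eq (S : Matrix (Fin (k + 1)) (Fin k) K)
    (hS : LinearIndependent K S.col) :
    ∃ N : GL (Fin (k + 1)) K, (N : Matrix (Fin (k + 1)) (Fin (k + 1)) K) * consZeroOne K k = S := by
  obtain ⟨w, hw⟩ : ∃ w, w ∉ Submodule.span K (Set.range S.col) := by
    refine SetLike.exists_not_mem_of_ne_top _ fun htop => ?_
    have := finrank_span_eq_card hS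
    rw [htop, finrank_top, Module.finrank_fin_fun, Fintype.card_fin] at this
    omega
  have hN : LinearIndependent K (of (Fin.cons w S.col))ᵀ.col :=
    linearIndependent_finCons.mpr ⟨hS, hw⟩
  refine ⟨(linearIndependent_cols_iff_isUnit.mp hN).unit, ?_⟩
  rw [IsUnit.unit_spec, mul_consZeroOne]
  rfl

section Pencil

variable {F : Type*} [Field F] (K) [Algebra F K] {m n : Type*} [Fintype n]

def IsNondegeneratePencil (S₀ S₁ : Matrix m n F) : Prop :=
  ∀ c₀ c₁ : K, ¬ (c₀ = 0 ∧ c₁ = 0) →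
    (c₀ • S₀.map (algebraMap F K) + c₁ • S₁.map (algebraMap F K)).rank = Fintype.card n

variable {K}

theorem IsNondegeneratePencil.linearIndependent_col {S₀ S₁ : Matrix m n F}
    (h : IsNondegeneratePencil K S₀ S₁) : LinearIndependent F S₀.col := by
  have h₀ := h 1 0 (by simp)
  rw [one_smul, zero_smul, add_zero, rank_eq_card_iff_forall_mulVec_eq_zero] at h₀
  rw [← mulVec_injective_iff]
  refine (injective_iff_map_eq_zero S₀.mulVecLin).mpr fun v hv => funext fun i => ?_
  have hv' := h₀ (algebraMap F K ∘ v) (funext fun j => by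
    rw [← RingHom.map_mulVec, ← mulVecLin_apply, hv, Pi.zero_apply, map_zero, Pi.zero_apply])
  exact (map_eq_zero _).mp (congrFun hv' i)

theorem isNondegeneratePencil_mul_left_iff [Fintype m] [DecidableEq m] {P : Matrix m m F}
    (hP : IsUnit P) (S₀ S₁ : Matrix m n F) :
    IsNondegeneratePencil K (P * S₀) (P * S₁) ↔ IsNondegeneratePencil K S₀ S₁ := by
  have hPK : IsUnit (P.map (algebraMap F K)).det :=
    (isUnit_iff_isUnit_det _).mp (hP.map (algebraMap F K).mapMatrix)
  refine forall₂_congr fun c₀ c₁ => imp_congr_right fun _ => ?_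
  rw [Matrix.map_mul, Matrix.map_mul, ← Matrix.mul_smul, ← Matrix.mul_smul, ← Matrix.mul_add,
    rank_mul_eq_right_of_isUnit_det _ _ hPK]

theorem isNondegeneratePencil_consZeroOne_iff [IsAlgClosed K]
    (T : Matrix (Fin (k + 1)) (Fin k) F) :
    IsNondegeneratePencil K (consZeroOne F k) T ↔
      IsUnit (observabilityMatrix (T 0) (T.submatrix Fin.succ id)) := by
  rw [← isUnit_map_iff (algebraMap F K), ← observabilityMatrix_map,
    isUnit_observabilityMatrix_iff, ← forall_pencil_iff_forall_eigenvector]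
  refine forall₂_congr fun c₀ c₁ => imp_congr_right fun _ => ?_
  rw [map_consZeroOne, rank_eq_card_iff_forall_mulVec_eq_zero]
  exact forall_congr' fun v => imp_congr_left
    (smul_consZeroOne_add_smul_mulVec_eq_zero_iff c₀ c₁ (T.map (algebraMap F K)) v)

variable (K)

def subtypeIsNondegeneratePencilEquivOfMulEq [Fintype m] [DecidableEq m] {N : GL m F}
    {S₀ E : Matrix m n F} (hE : (N : Matrix m m F) * E = S₀) :
    {S₁ // IsNondegeneratePencil K S₀ S₁} ≃ {T // IsNondegeneratePencil K E T} where
  toFun S₁ := ⟨N⁻¹.val * S₁.1, (isNondegeneratePencil_mul_left_iff N.isUnit _ _).mp <| by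
    rw [hE, ← Matrix.mul_assoc, Units.mul_inv, Matrix.one_mul]
    exact S₁.2⟩
  invFun T := ⟨N.val * T.1, hE ▸ (isNondegeneratePencil_mul_left_iff N.isUnit _ _).mpr T.2⟩
  left_inv S₁ := Subtype.ext <| show N.val * (N⁻¹.val * S₁.1) = S₁.1 by
    rw [← Matrix.mul_assoc, Units.mul_inv, Matrix.one_mul]
  right_inv T := Subtype.ext <| show N⁻¹.val * (N.val * T.1) = T.1 by
    rw [← Matrix.mul_assoc, Units.inv_mul, Matrix.one_mul]

def isNondegeneratePencilEquivSigma (k : ℕ) :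
    {S : Matrix (Fin (k + 1)) (Fin k) F × Matrix (Fin (k + 1)) (Fin k) F //
        IsNondegeneratePencil K S.1 S.2} ≃
      Σ S₀ : {S₀ : Matrix (Fin (k + 1)) (Fin k) F // LinearIndependent F S₀.col},
        {S₁ // IsNondegeneratePencil K S₀.1 S₁} where
  toFun S := ⟨⟨S.1.1, S.2.linearIndependent_col⟩, ⟨S.1.2, S.2⟩⟩
  invFun S := ⟨(S.1.1, S.2.1), S.2.2⟩

noncomputable def isNondegeneratePencilFiberEquiv (k : ℕ)
    (S₀ : {S₀ : Matrix (Fin (k + 1)) (Fin k) F // LinearIndependent F S₀.col}) :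
    {S₁ // IsNondegeneratePencil K S₀.1 S₁} ≃ {T // IsNondegeneratePencil K (consZeroOne F k) T} :=
  subtypeIsNondegeneratePencilEquivOfMulEq K (exists_mul_consZeroOne_eq S₀.1 S₀.2).choose_spec

noncomputable def isNondegeneratePencilEquivProd (k : ℕ) :
    {S : Matrix (Fin (k + 1)) (Fin k) F × Matrix (Fin (k + 1)) (Fin k) F //
        IsNondegeneratePencil K S.1 S.2} ≃
      {S₀ : Matrix (Fin (k + 1)) (Fin k) F // LinearIndependent F S₀.col} ×
        {T // IsNondegeneratePencil K (consZeroOne F k) T} :=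
  (isNondegeneratePencilEquivSigma K k).trans <|
    (Equiv.sigmaCongrRight (isNondegeneratePencilFiberEquiv K k)).trans <|
      Equiv.sigmaEquivProd _ _

def isNondegeneratePencilConsZeroOneEquiv [IsAlgClosed K] (k : ℕ) :
    {T : Matrix (Fin (k + 1)) (Fin k) F // IsNondegeneratePencil K (consZeroOne F k) T} ≃
      {p : (Fin k → F) × Matrix (Fin k) (Fin k) F // IsUnit (observabilityMatrix p.1 p.2)} :=
  Equiv.subtypeEquiv (Fin.consEquiv fun _ => Fin k → F).symm
    isNondegeneratePencil_consZeroOne_iff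

end Pencil

end Matrix

theorem sub_one_mul_qInt_add_one {q : ℕ} (hq : 1 ≤ q) (n : ℕ) :
    (q - 1) * qInt q n + 1 = q ^ n := by
  obtain ⟨r, rfl⟩ : ∃ r, q = r + 1 := ⟨q - 1, by omega⟩
  rw [Nat.add_sub_cancel, qInt, mul_comm]
  exact geom_sum_mul_add r n

theorem pow_sub_pow_eq_mul_qInt {q : ℕ} (hq : 1 ≤ q) {i m : ℕ} (h : i ≤ m) :
    q ^ m - q ^ i = q ^ i * ((q - 1) * qInt q (m - i)) := by
  conv_lhs => rw [← Nat.add_sub_cancel' h, pow_add, ← sub_one_mul_qInt_add_one hq (m - i),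
    mul_add_one, Nat.add_sub_cancel]

theorem prod_range_pow_sub_pow {q : ℕ} (hq : 1 ≤ q) (n m : ℕ) :
    ∏ i ∈ range n, (q ^ (n + m) - q ^ i) =
      q ^ (∑ i ∈ range n, i) * (q - 1) ^ n * ∏ i ∈ range n, qInt q (m + i + 1) := by
  rw [prod_congr rfl fun i hi => pow_sub_pow_eq_mul_qInt hq (by have := mem_range.mp hi; omega),
    prod_mul_distrib, prod_mul_distrib, prod_pow_eq_pow_sum, prod_const, card_range, mul_assoc,
    ← prod_range_reflect]
  congr 2
  refine prod_congr rfl fun i hi => ?_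
  have := mem_range.mp hi
  congr 1
  omega

theorem prod_range_pow_sub_pow_mul_eq_qFact_mul_qFact {q : ℕ} (hq : 1 ≤ q) (k : ℕ) :
    (∏ i ∈ range k, (q ^ (k + 1) - q ^ i)) * ((∏ i ∈ range k, (q ^ k - q ^ i)) * q ^ k) =
      q ^ (k ^ 2) * (q - 1) ^ (2 * k) * qFact q k * qFact q (k + 1) := by
  have hexp : (∑ i ∈ range k, i) + (∑ i ∈ range k, i) + k = k ^ 2 := by
    induction k with
    | zero => rfl
    | succ k ih =>
      rw [sum_range_succ]
      nlinarith [ih]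
  have h₀ := prod_range_pow_sub_pow hq k 0
  have h₁ := prod_range_pow_sub_pow hq k 1
  have hfact : qFact q (k + 1) = ∏ i ∈ range k, qInt q (1 + i + 1) := by
    rw [qFact, prod_range_succ']
    simp [qInt, add_comm]
  rw [add_zero] at h₀
  rw [h₀, h₁, hfact, qFact, ← hexp, two_mul]
  simp only [zero_add, pow_add]
  ring

/-- The number of nondegenerate `2 × k × (k+1)` hypermatrices over the finite field
`F_q` equals `q^{k²} (q-1)^{2k} [k]!_q [k+1]!_q`. -/
theorem stmt5 {F : Type*} [Field F] [Fintype F] (k : ℕ) :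
    Nat.card {S : Matrix (Fin (k+1)) (Fin k) F × Matrix (Fin (k+1)) (Fin k) F //
        ∀ c₀ c₁ : AlgebraicClosure F, ¬ (c₀ = 0 ∧ c₁ = 0) →
          (c₀ • S.1.map (algebraMap F (AlgebraicClosure F)) +
           c₁ • S.2.map (algebraMap F (AlgebraicClosure F))).rank = k} =
      (Fintype.card F) ^ (k ^ 2) * (Fintype.card F - 1) ^ (2 * k) *
        qFact (Fintype.card F) k * qFact (Fintype.card F) (k + 1) := by
  set q := Fintype.card F
  have hq : 1 ≤ q := Fintype.card_pos
  calc _ = Nat.card {S : Matrix (Fin (k + 1)) (Fin k) F × Matrix (Fin (k + 1)) (Fin k) F //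
        IsNondegeneratePencil (AlgebraicClosure F) S.1 S.2} := by
        simp only [IsNondegeneratePencil, Fintype.card_fin]
    _ = Nat.card {s : Fin k → Fin (k + 1) → F // LinearIndependent F s} *
        Nat.card {p : (Fin k → F) × Matrix (Fin k) (Fin k) F //
          IsUnit (observabilityMatrix p.1 p.2)} := by
        rw [Nat.card_congr (isNondegeneratePencilEquivProd _ k), Nat.card_prod,
          Nat.card_congr (isNondegeneratePencilConsZeroOneEquiv _ k)]
        exact congrArg (· * _) (Nat.card_congr
          (Equiv.subtypeEquiv (transposeAddEquiv _ _ F).toEquiv fun _ => Iff.rfl))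
    _ = (∏ i ∈ range k, (q ^ (k + 1) - q ^ i)) * ((∏ i ∈ range k, (q ^ k - q ^ i)) * q ^ k) := by
        rw [card_observablePairs, card_GL_field, card_linearIndependent (by simp),
          Module.finrank_fin_fun, Fin.prod_univ_eq_prod_range (fun i => q ^ (k + 1) - q ^ i),
          Fin.prod_univ_eq_prod_range (fun i => q ^ k - q ^ i)]
    _ = _ := prod_range_pow_sub_pow_mul_eq_qFact_mul_qFact hq k
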